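/- For all N, M ∈ ℕ with (N,M) not in the exceptional set E = {(0,0),(1,0),(0,1),(1,1)}, the pruning automorphism ρ_{N,M} is an automorphism of the 2-shift: ρ_{N,M} is a homeomorphism of Σ₂ onto itself satisfying ρ_{N,M} ∘ σ = σ ∘ ρ_{N,M}. -/
import Mathlib


/-- The full 2-shift `Σ₂ = {0,1}^ℤ` (product topology, `{0,1}` discrete). -/
abbrev Sigma2 := ℤ → Fin 2

/-- The shift map `(σ s)_i = s_{i+1}`. -/
def shift (s : Sigma2) : Sigma2 := fun i => s (i + 1)

/-- The pruning pattern occurs in `s` at position `i` if `s_{i-1} = 1`, `s_{i+1} = 1`,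
`s_{i-1-k} = 0` for `1 ≤ k ≤ N` and `s_{i+1+k} = 0` for `1 ≤ k ≤ M`. -/
def pattern (N M : ℕ) (s : Sigma2) (i : ℤ) : Prop :=
  s (i - 1) = 1 ∧ s (i + 1) = 1 ∧
    (∀ k : ℕ, 1 ≤ k → k ≤ N → s (i - 1 - (k : ℤ)) = 0) ∧
    (∀ k : ℕ, 1 ≤ k → k ≤ M → s (i + 1 + (k : ℤ)) = 0)

open Classical in
/-- The pruning automorphism `ρ_{N,M}`: it flips coordinate `i` exactly when the
pruning pattern occurs in `s` at position `i`. -/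
noncomputable def rho (N M : ℕ) (s : Sigma2) : Sigma2 :=
  fun i => if pattern N M s i then 1 - s i else s i

/-- The pattern at `i` only depends on coordinates in `[i-1-N, i+1+M]` other than `i`. -/
lemma pattern_congr {N M : ℕ} {s t : Sigma2} {i : ℤ}
    (h : ∀ j : ℤ, i - 1 - N ≤ j → j ≤ i + 1 + M → j ≠ i → s j = t j) :
    pattern N M s i ↔ pattern N M t i := by
  have h1 : s (i - 1) = t (i - 1) := h _ (by omega) (by omega) (by omega)
  have h2 : s (i + 1) = t (i + 1) := h _ (by omega) (by omega) (by omega)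
  constructor <;> rintro ⟨p1, p2, p3, p4⟩
  · refine ⟨h1 ▸ p1, h2 ▸ p2, fun k hk1 hk2 => ?_, fun k hk1 hk2 => ?_⟩
    · rw [← h _ (by omega) (by omega) (by omega)]; exact p3 k hk1 hk2
    · rw [← h _ (by omega) (by omega) (by omega)]; exact p4 k hk1 hk2
  · refine ⟨h1.symm ▸ p1, h2.symm ▸ p2, fun k hk1 hk2 => ?_, fun k hk1 hk2 => ?_⟩
    · rw [h _ (by omega) (by omega) (by omega)]; exact p3 k hk1 hk2
    · rw [h _ (by omega) (by omega) (by omega)]; exact p4 k hk1 hk2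

/-- Separation: away from the exceptional set, two patterns cannot occur at
distance at most `max N M + 1`. -/
lemma pattern_sep {N M : ℕ} (hNM : 2 ≤ N ∨ 2 ≤ M) {s : Sigma2} {i : ℤ} {d : ℕ}
    (hd1 : 1 ≤ d) (hd2 : d ≤ max N M + 1)
    (hi : pattern N M s i) (hj : pattern N M s (i + d)) : False := by
  obtain ⟨a1, a2, a3, a4⟩ := hi
  obtain ⟨b1, b2, b3, b4⟩ := hj
  have hmax : max N M ≤ N ∨ max N M ≤ M := by
    rcases le_total N M with h | h
    · right; omega
    · left; omega
  rcases le_or_gt d N with h | hN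
  · have := b3 d hd1 h
    rw [show i + (d : ℤ) - 1 - (d : ℤ) = i - 1 by ring, a1] at this
    exact absurd this (by decide)
  rcases le_or_gt d M with h | hM
  · have := a4 d hd1 h
    rw [show i + 1 + (d : ℤ) = i + (d : ℤ) + 1 by ring, b2] at this
    exact absurd this (by decide)
  rcases le_total N M with h | h
  · -- d = M + 1, M ≥ 2
    have hM2 : 2 ≤ M := by omega
    have hdM : d = M + 1 := by omega
    have := a4 (M - 1) (by omega) (by omega)
    rw [show i + 1 + ((M - 1 : ℕ) : ℤ) = i + (d : ℤ) - 1 by omega, b1] at this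
    exact absurd this (by decide)
  · -- d = N + 1, N ≥ 2
    have hN2 : 2 ≤ N := by omega
    have hdN : d = N + 1 := by omega
    have := b3 (N - 1) (by omega) (by omega)
    rw [show i + (d : ℤ) - 1 - ((N - 1 : ℕ) : ℤ) = i + 1 by omega, a2] at this
    exact absurd this (by decide)

/-- Separation, restated for a position `j` in the reading window of `i`. -/
lemma pattern_sep' {N M : ℕ} (hNM : 2 ≤ N ∨ 2 ≤ M) {s : Sigma2} {i j : ℤ}
    (hlo : i - 1 - N ≤ j) (hhi : j ≤ i + 1 + M) (hne : j ≠ i)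
    (hi : pattern N M s i) (hj : pattern N M s j) : False := by
  rcases lt_or_gt_of_ne hne with h | h
  · -- j < i, so i = j + d with 1 ≤ d ≤ N + 1
    refine pattern_sep hNM (d := (i - j).toNat) (by omega)
      (le_trans (by omega : (i - j).toNat ≤ N + 1)
        (Nat.succ_le_succ (le_max_left N M))) hj ?_
    rw [show j + (((i - j).toNat : ℕ) : ℤ) = i by omega]
    exact hi
  · -- i < j, so j = i + d with 1 ≤ d ≤ M + 1
    refine pattern_sep hNM (d := (j - i).toNat) (by omega)
      (le_trans (by omega : (j - i).toNat ≤ M + 1)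
        (Nat.succ_le_succ (le_max_right N M))) hi ?_
    rw [show i + (((j - i).toNat : ℕ) : ℤ) = j by omega]
    exact hj

lemma rho_eq_of_pattern {N M : ℕ} (hNM : 2 ≤ N ∨ 2 ≤ M) {s : Sigma2} {i : ℤ}
    (hi : pattern N M s i) :
    ∀ j : ℤ, i - 1 - N ≤ j → j ≤ i + 1 + M → j ≠ i → rho N M s j = s j := by
  intro j h1 h2 h3
  have : ¬ pattern N M s j := fun hj => pattern_sep' hNM h1 h2 h3 hi hj
  simp [rho, this]

/-- Applying `rho` does not change where the pattern occurs. -/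
lemma pattern_rho {N M : ℕ} (hNM : 2 ≤ N ∨ 2 ≤ M) (s : Sigma2) (i : ℤ) :
    pattern N M (rho N M s) i ↔ pattern N M s i := by
  constructor
  · intro hri
    by_contra hsi
    have hex : ∃ j : ℤ, (i - 1 - N ≤ j) ∧ (j ≤ i + 1 + M) ∧ j ≠ i ∧ rho N M s j ≠ s j := by
      by_contra hc
      push_neg at hc
      exact hsi ((pattern_congr (fun j h1 h2 h3 => hc j h1 h2 h3)).mp hri)
    obtain ⟨j, h1, h2, h3, h4⟩ := hex
    have hj : pattern N M s j := by
      by_contra h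
      exact h4 (by simp [rho, h])
    have hrj : pattern N M (rho N M s) j :=
      (pattern_congr (rho_eq_of_pattern hNM hj)).mpr hj
    exact pattern_sep' hNM h1 h2 h3 hri hrj
  · intro hi
    exact (pattern_congr (rho_eq_of_pattern hNM hi)).mpr hi

/-- `rho` is an involution. -/
lemma rho_invol {N M : ℕ} (hNM : 2 ≤ N ∨ 2 ≤ M) (s : Sigma2) :
    rho N M (rho N M s) = s := by
  classical
  funext i
  have e1 : rho N M (rho N M s) i =
      if pattern N M (rho N M s) i then 1 - rho N M s i else rho N M s i := rfl
  rw [e1, if_congr (pattern_rho hNM s i) rfl rfl]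
  by_cases h : pattern N M s i
  · rw [if_pos h, show rho N M s i = 1 - s i from by simp [rho, h]]
    exact (by decide : ∀ x : Fin 2, 1 - (1 - x) = x) _
  · rw [if_neg h]; simp [rho, h]

lemma pattern_shift {N M : ℕ} (s : Sigma2) (i : ℤ) :
    pattern N M (shift s) i ↔ pattern N M s (i + 1) := by
  simp only [pattern, shift]
  constructor <;> rintro ⟨h1, h2, h3, h4⟩
  · refine ⟨by rw [show i + 1 - 1 = i - 1 + 1 by ring]; exact h1, h2,
      fun k hk1 hk2 => ?_, fun k hk1 hk2 => ?_⟩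
    · rw [show i + 1 - 1 - (k : ℤ) = i - 1 - (k : ℤ) + 1 by ring]; exact h3 k hk1 hk2
    · rw [show i + 1 + 1 + (k : ℤ) = i + 1 + (k : ℤ) + 1 by ring]; exact h4 k hk1 hk2
  · refine ⟨by rw [show i - 1 + 1 = i + 1 - 1 by ring]; exact h1, h2,
      fun k hk1 hk2 => ?_, fun k hk1 hk2 => ?_⟩
    · rw [show i - 1 - (k : ℤ) + 1 = i + 1 - 1 - (k : ℤ) by ring]; exact h3 k hk1 hk2
    · rw [show i + 1 + (k : ℤ) + 1 = i + 1 + 1 + (k : ℤ) by ring]; exact h4 k hk1 hk2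

/-- `rho` commutes with the shift. -/
lemma rho_shift {N M : ℕ} (s : Sigma2) :
    rho N M (shift s) = shift (rho N M s) := by
  funext i
  by_cases h : pattern N M s (i + 1)
  · have h' : pattern N M (shift s) i := (pattern_shift s i).mpr h
    simp [rho, shift, h, h']
  · have h' : ¬ pattern N M (shift s) i := fun hc => h ((pattern_shift s i).mp hc)
    simp [rho, shift, h, h']

/-- `rho s i` only depends on coordinates of `s` in `[i-1-N, i+1+M]`. -/
lemma rho_congr {N M : ℕ} {s t : Sigma2} {i : ℤ}
    (h : ∀ j : ℤ, i - 1 - N ≤ j → j ≤ i + 1 + M → s j = t j) :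
    rho N M s i = rho N M t i := by
  have hp : pattern N M s i ↔ pattern N M t i :=
    pattern_congr (fun j h1 h2 _ => h j h1 h2)
  have hi : s i = t i := h i (by omega) (by omega)
  by_cases hc : pattern N M s i
  · simp [rho, hc, hp.mp hc, hi]
  · have hc' : ¬ pattern N M t i := fun x => hc (hp.mpr x)
    simp [rho, hc, hc', hi]

lemma rho_continuous (N M : ℕ) : Continuous (rho N M) := by
  refine continuous_pi fun i => ?_
  let ext : (Fin (N + M + 3) → Fin 2) → Sigma2 := fun w j =>
    if h : i - 1 - N ≤ j ∧ j ≤ i + 1 + M then w ⟨(j - (i - 1 - N)).toNat, by omega⟩ else 0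
  have key : ∀ s : Sigma2,
      rho N M (ext (fun k => s (i - 1 - N + (k.val : ℤ)))) i = rho N M s i := by
    intro s
    apply rho_congr
    intro j h1 h2
    have hj : i - 1 - (N : ℤ) ≤ j ∧ j ≤ i + 1 + (M : ℤ) := ⟨h1, h2⟩
    simp only [ext]
    rw [dif_pos hj]
    show s (i - 1 - N + ((j - (i - 1 - (N : ℤ))).toNat : ℤ)) = s j
    congr 1
    omega
  have heq : (fun s : Sigma2 => rho N M s i) =
      (fun w : Fin (N + M + 3) → Fin 2 => rho N M (ext w) i) ∘
        (fun (s : Sigma2) (k : Fin (N + M + 3)) => s (i - 1 - N + (k.val : ℤ))) := by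
    funext s; exact (key s).symm
  rw [heq]
  exact continuous_of_discreteTopology.comp (continuous_pi fun k => continuous_apply _)

/-- Away from the exceptional set `E`, the pruning automorphism `ρ_{N,M}` is an
automorphism of the 2-shift: a homeomorphism of `Σ₂` onto itself commuting with
the shift. -/
theorem rho_is_shift_automorphism (N M : ℕ)
    (hE : (N, M) ∉ ({(0, 0), (1, 0), (0, 1), (1, 1)} : Set (ℕ × ℕ))) :
    ∃ h : Sigma2 ≃ₜ Sigma2, (∀ s, h s = rho N M s) ∧
      rho N M ∘ shift = shift ∘ rho N M := by
  have hNM : 2 ≤ N ∨ 2 ≤ M := by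
    simp only [Set.mem_insert_iff, Set.mem_singleton_iff, Prod.mk.injEq] at hE
    push_neg at hE
    omega
  refine ⟨{ toFun := rho N M, invFun := rho N M,
            left_inv := rho_invol hNM, right_inv := rho_invol hNM,
            continuous_toFun := rho_continuous N M,
            continuous_invFun := rho_continuous N M },
          fun s => rfl, ?_⟩
  funext s
  exact rho_shift s
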